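/- Let $h : (0,\infty) \to [0,\infty)$ be nonincreasing, locally integrable, with $h^{**}(t) = \frac{1}{t}\int_0^t h(s)\,ds$. Then for all $t>0$: $h^{**}(t) - h(t) \leq \frac{1}{t}\int_0^t [h(s/2) - h(s)]\,ds + [h(t/2) - h(t)]$. -/

import Mathlib

/-!
Substituting `s = 2u` gives `∫₀^t h(s/2) ds = 2 ∫₀^{t/2} h`, hence
`∫₀^t [h(s/2) - h(s)] ds = ∫₀^t h - 2 ∫_{t/2}^t h`, and the claim reduces to
`(2/t) ∫_{t/2}^t h ≤ h(t/2)`, which holds because `h ≤ h(t/2)` on `[t/2, t]`.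
-/

open Set MeasureTheory

theorem AntitoneOn.intervalIntegral_le_sub_mul {f : ℝ → ℝ} {a b : ℝ} (hab : a ≤ b)
    (hf : AntitoneOn f (Icc a b)) : ∫ x in a..b, f x ≤ (b - a) * f a := by
  have ha : a ∈ Icc a b := left_mem_Icc.mpr hab
  calc ∫ x in a..b, f x ≤ ∫ _ in a..b, f a :=
        intervalIntegral.integral_mono_on hab
          (hf.mono (uIcc_of_le hab).subset).intervalIntegrable intervalIntegrable_const
          fun x hx => hf ha hx hx.1
    _ = (b - a) * f a := by rw [intervalIntegral.integral_const, smul_eq_mul]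

theorem half_mem_uIcc_zero (t : ℝ) : t / 2 ∈ uIcc 0 t := by
  rcases le_total 0 t with ht | ht
  · exact (uIcc_of_le ht).symm ▸ ⟨by linarith, by linarith⟩
  · exact (uIcc_of_ge ht).symm ▸ ⟨by linarith, by linarith⟩

theorem intervalIntegral_comp_div_two_sub {f : ℝ → ℝ} {t : ℝ}
    (hf : IntervalIntegrable f volume 0 t) :
    ∫ s in (0:ℝ)..t, (f (s / 2) - f s) = (∫ s in (0:ℝ)..t, f s) - 2 * ∫ s in t / 2..t, f s := by
  have hleft : IntervalIntegrable f volume 0 (t / 2) :=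
    hf.mono_set (uIcc_subset_uIcc left_mem_uIcc (half_mem_uIcc_zero t))
  have hright : IntervalIntegrable f volume (t / 2) t :=
    hf.mono_set (uIcc_subset_uIcc (half_mem_uIcc_zero t) right_mem_uIcc)
  have hhalf : IntervalIntegrable (fun s => f (s / 2)) volume 0 t := by
    simpa [div_eq_mul_inv] using hleft.comp_mul_right (c := 2⁻¹)
  rw [intervalIntegral.integral_sub hhalf hf, intervalIntegral.integral_comp_div f two_ne_zero,
    zero_div, ← intervalIntegral.integral_add_adjacent_intervals hleft hright, smul_eq_mul]
  ring

theorem stmt11_general (h : ℝ → ℝ)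
    (hmono : AntitoneOn h (Ioi 0))
    (hloc : ∀ t, 0 < t → IntegrableOn h (Ioc 0 t))
    (t : ℝ) (ht : 0 < t) :
    (1/t) * (∫ s in Ioc (0:ℝ) t, h s) - h t
      ≤ (1/t) * (∫ s in Ioc (0:ℝ) t, (h (s/2) - h s)) + (h (t/2) - h t) := by
  have hint : IntervalIntegrable h volume 0 t :=
    (intervalIntegrable_iff_integrableOn_Ioc_of_le ht.le).mpr (hloc t ht)
  have hupper : 1 / t * (2 * ∫ s in t / 2..t, h s) ≤ h (t / 2) := by
    have := AntitoneOn.intervalIntegral_le_sub_mul (f := h) (a := t / 2) (b := t)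
      (by linarith)
      (hmono.mono fun x hx => lt_of_lt_of_le (by linarith) hx.1)
    rw [div_mul_eq_mul_div, one_mul, div_le_iff₀ ht]
    linarith
  rw [← intervalIntegral.integral_of_le ht.le, ← intervalIntegral.integral_of_le ht.le,
    intervalIntegral_comp_div_two_sub hint, mul_sub]
  linarith

/-- For `h ≥ 0` nonincreasing and locally integrable on `(0,∞)`:
`h^{**}(t) - h(t) ≤ (1/t)∫_0^t [h(s/2) - h(s)] ds + [h(t/2) - h(t)]`. -/
theorem stmt11 (h : ℝ → ℝ)
    (h0 : ∀ t, 0 < t → 0 ≤ h t) (hmono : AntitoneOn h (Ioi 0))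
    (hloc : ∀ t, 0 < t → IntegrableOn h (Ioc 0 t))
    (t : ℝ) (ht : 0 < t) :
    (1/t) * (∫ s in Ioc (0:ℝ) t, h s) - h t
      ≤ (1/t) * (∫ s in Ioc (0:ℝ) t, (h (s/2) - h s)) + (h (t/2) - h t) :=
  stmt11_general h hmono hloc t ht
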